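/- arXiv:2210.11205 — 4 statements merged into one kernel-verified Lean document; each statement's English description precedes it below -/
import Mathlib

section
/- Suppose β = 0 and (P_A, M, P_B) is a time-independent solution of the adjuvant system, i.e. constants P_A, P_B ∈ ℝ and a twice continuously differentiable function M : [0,L] → ℝ satisfying: 0 = −λ_A A (P_A − κ_{A,1} M(0)/A); D_P M''(x) = 0 for all x ∈ [0,L]; 0 = λ_B A (κ_{B,1} M(L)/A − P_B); the flux boundary conditions −D_P M'(0) = λ_A A (P_A − κ_{A,1} M(0)/A) and −D_P M'(L) = λ_B A (κ_{B,1} M(L)/A − P_B); and the total-mass constraint V_A P_A + ∫_0^L M(x) dx + V_B P_B = V_A P_A^0. Then M is constant on [0,L] and P_A = κ_{A,1} V_A P_A^0 / (κ_{A,1} V_A + κ_{B,1} V_B + A L), M ≡ A P_A / κ_{A,1}, P_B = (κ_{B,1}/κ_{A,1}) P_A. -/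
/-! With `β = 0` the boundary balance at the droplet kills the flux there, so `M' (0) = 0`; together
with `M'' = 0` this makes `M` constant on `[0, L]`. The two interface balances then express `P_A`
and `P_B` through that constant, and the total-mass constraint, whose integral is now `L · M`,
fixes it. -/

open Set

lemma eqOn_Icc_of_derivWithin_derivWithin_eq_zero {f : ℝ → ℝ} {a b : ℝ} (hab : a < b)
    (hf : ContDiffOn ℝ 2 f (Icc a b))
    (hf'' : ∀ x ∈ Icc a b, derivWithin (derivWithin f (Icc a b)) (Icc a b) x = 0)
    (hf'a : derivWithin f (Icc a b) a = 0) :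
    ∀ x ∈ Icc a b, f x = f a := by
  have hf' : ContDiffOn ℝ 1 (derivWithin f (Icc a b)) (Icc a b) :=
    hf.derivWithin (uniqueDiffOn_Icc hab) (by norm_num)
  have hf'_const : ∀ x ∈ Icc a b, derivWithin f (Icc a b) x = 0 := by
    intro x hx
    rw [← hf'a]
    exact constant_of_derivWithin_zero (hf'.differentiableOn one_ne_zero)
      (fun y hy => hf'' y (Ico_subset_Icc_self hy)) x hx
  exact constant_of_derivWithin_zero (hf.differentiableOn (by norm_num))
    (fun y hy => hf'_const y (Ico_subset_Icc_self hy))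

lemma eq_of_transfer_balance {lam A P c : ℝ} (hlam : 0 < lam) (hA : 0 < A)
    (h : lam * A * (P - c) = 0) : P = c :=
  sub_eq_zero.1 ((mul_eq_zero.1 h).resolve_left (by positivity))

lemma intervalIntegral_eq_of_eqOn_Icc {f : ℝ → ℝ} {a b c : ℝ} (hab : a ≤ b)
    (hf : ∀ x ∈ Icc a b, f x = c) : ∫ x in a..b, f x = (b - a) * c := by
  rw [intervalIntegral.integral_congr (g := fun _ => c) (by rwa [uIcc_of_le hab]),
    intervalIntegral.integral_const, smul_eq_mul]

theorem adjuvant_steady_state_unique_general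
    (V_A V_B A L D_P lamA lamB κA1 κB1 PA0 : ℝ)
    (hVA : 0 < V_A) (hVB : 0 < V_B) (hA : 0 < A) (hL : 0 < L)
    (hDP : 0 < D_P) (hlamA : 0 < lamA) (hlamB : 0 < lamB)
    (hκA : 0 < κA1) (hκB : 0 < κB1)
    (P_A P_B : ℝ) (M : ℝ → ℝ)
    (hM : ContDiffOn ℝ 2 M (Set.Icc 0 L))
    (hodeA : (0 : ℝ) = -(lamA * A * (P_A - κA1 * M 0 / A)))
    (hpde : ∀ x ∈ Set.Icc (0 : ℝ) L,
      D_P * derivWithin (derivWithin M (Set.Icc 0 L)) (Set.Icc 0 L) x = 0)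
    (hodeB : (0 : ℝ) = lamB * A * (κB1 * M L / A - P_B))
    (hbc0 : -(D_P * derivWithin M (Set.Icc 0 L) 0) =
      lamA * A * (P_A - κA1 * M 0 / A))
    (hmass : V_A * P_A + (∫ x in (0 : ℝ)..L, M x) + V_B * P_B = V_A * PA0) :
    (∀ x ∈ Set.Icc (0 : ℝ) L, ∀ x' ∈ Set.Icc (0 : ℝ) L, M x = M x') ∧
    P_A = κA1 * V_A * PA0 / (κA1 * V_A + κB1 * V_B + A * L) ∧
    (∀ x ∈ Set.Icc (0 : ℝ) L, M x = A * P_A / κA1) ∧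
    P_B = (κB1 / κA1) * P_A := by
  have hM'0 : derivWithin M (Icc 0 L) 0 = 0 :=
    (mul_eq_zero.1 (neg_eq_zero.1 (hbc0.trans (by linarith)))).resolve_left hDP.ne'
  have hM_const : ∀ x ∈ Icc 0 L, M x = M 0 :=
    eqOn_Icc_of_derivWithin_derivWithin_eq_zero hL hM
      (fun x hx => (mul_eq_zero.1 (hpde x hx)).resolve_left hDP.ne') hM'0
  have hPA : P_A = κA1 * M 0 / A := eq_of_transfer_balance hlamA hA (by linarith)
  have hPB : P_B = κB1 * M 0 / A := by
    rw [← hM_const L (right_mem_Icc.2 hL.le)]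
    exact (eq_of_transfer_balance hlamB hA (by linarith)).symm
  have hmass' : V_A * P_A + L * M 0 + V_B * P_B = V_A * PA0 := by
    rwa [intervalIntegral_eq_of_eqOn_Icc hL.le hM_const, sub_zero] at hmass
  refine ⟨fun x hx x' hx' => by rw [hM_const x hx, hM_const x' hx'], ?_,
    fun x hx => by rw [hM_const x hx, hPA]; field_simp, by rw [hPB, hPA]; field_simp⟩
  rw [hPA, hPB] at hmass'
  rw [hPA, eq_div_iff (by positivity)]
  field_simp at hmass' ⊢
  linear_combination hmass'

/-- Uniqueness of the adjuvant steady state with `β = 0`: any time-independent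
solution of the adjuvant system (zero ODE right-hand sides, `D_P M'' = 0` in
the cuticle, flux boundary conditions, and total mass `V_A P_A⁰`) is the
explicit steady state: `M` is constant on `[0,L]` and
`P_A = κ_{A,1} V_A P_A⁰ / (κ_{A,1} V_A + κ_{B,1} V_B + A L)`,
`M ≡ A P_A / κ_{A,1}`, `P_B = (κ_{B,1}/κ_{A,1}) P_A`. -/
theorem adjuvant_steady_state_unique
    (V_A V_B A L D_P lamA lamB κA1 κB1 PA0 : ℝ)
    (hVA : 0 < V_A) (hVB : 0 < V_B) (hA : 0 < A) (hL : 0 < L)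
    (hDP : 0 < D_P) (hlamA : 0 < lamA) (hlamB : 0 < lamB)
    (hκA : 0 < κA1) (hκB : 0 < κB1) (hPA0 : 0 < PA0)
    (P_A P_B : ℝ) (M : ℝ → ℝ)
    (hM : ContDiffOn ℝ 2 M (Set.Icc 0 L))
    (hodeA : (0 : ℝ) = -(lamA * A * (P_A - κA1 * M 0 / A)))
    (hpde : ∀ x ∈ Set.Icc (0 : ℝ) L,
      D_P * derivWithin (derivWithin M (Set.Icc 0 L)) (Set.Icc 0 L) x = 0)
    (hodeB : (0 : ℝ) = lamB * A * (κB1 * M L / A - P_B))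
    (hbc0 : -(D_P * derivWithin M (Set.Icc 0 L) 0) =
      lamA * A * (P_A - κA1 * M 0 / A))
    (hbcL : -(D_P * derivWithin M (Set.Icc 0 L) L) =
      lamB * A * (κB1 * M L / A - P_B))
    (hmass : V_A * P_A + (∫ x in (0 : ℝ)..L, M x) + V_B * P_B = V_A * PA0) :
    (∀ x ∈ Set.Icc (0 : ℝ) L, ∀ x' ∈ Set.Icc (0 : ℝ) L, M x = M x') ∧
    P_A = κA1 * V_A * PA0 / (κA1 * V_A + κB1 * V_B + A * L) ∧
    (∀ x ∈ Set.Icc (0 : ℝ) L, M x = A * P_A / κA1) ∧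
    P_B = (κB1 / κA1) * P_A :=
  adjuvant_steady_state_unique_general V_A V_B A L D_P lamA lamB κA1 κB1 PA0 hVA hVB hA hL hDP hlamA
    hlamB hκA hκB P_A P_B M hM hodeA hpde hodeB hbc0 hmass
end

section
/- Suppose η = 0, d : [0,L] → ℝ is a continuous function with d(x) > 0 for all x ∈ [0,L], and (Q_A, N, Q_B) is a time-independent solution of the active-ingredient system with diffusion coefficient d, i.e. constants Q_A, Q_B ∈ ℝ and a continuously differentiable N : [0,L] → ℝ such that x ↦ d(x) N'(x) is differentiable with (d(x) N'(x))' = 0 on [0,L], and: 0 = −μ_A A (Q_A − K_{A,1} N(0)/A); 0 = μ_B A (K_{B,1} N(L)/A − Q_B); the flux boundary conditions −d(0) N'(0) = μ_A A (Q_A − K_{A,1} N(0)/A) and −d(L) N'(L) = μ_B A (K_{B,1} N(L)/A − Q_B); and the total-mass constraint V_A Q_A + ∫_0^L N(x) dx + V_B Q_B = V_A Q_A^0. Then N is constant on [0,L] and Q_A = K_{A,1} V_A Q_A^0 / (K_{A,1} V_A + K_{B,1} V_B + A L), N ≡ A Q_A / K_{A,1}, Q_B = (K_{B,1}/K_{A,1})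 Q_A. -/
/-!
The flux `d N'` has zero derivative, so it is constant on `[0, L]`; at `x = 0` it equals the
droplet transfer rate, which vanishes at equilibrium. As `d > 0`, this forces `N' = 0`, so `N`
is a constant `c`. The equilibrium equations of the two compartments then give
`Q_A = K_{A,1} c / A` and `Q_B = K_{B,1} c / A`, and the mass constraint becomes linear in `c`.
-/

open Set

section ConstantFlux

variable {a b : ℝ} {d N : ℝ → ℝ}

theorem flux_eq_zero_of_derivWithin_eq_zero
    (hdiff : DifferentiableOn ℝ (fun x => d x * derivWithin N (Icc a b) x) (Icc a b))
    (hderiv : ∀ x ∈ Icc a b,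
      derivWithin (fun x' => d x' * derivWithin N (Icc a b) x') (Icc a b) x = 0)
    (ha : d a * derivWithin N (Icc a b) a = 0) :
    ∀ x ∈ Icc a b, d x * derivWithin N (Icc a b) x = 0 := fun x hx =>
  (constant_of_derivWithin_zero hdiff (fun y hy => hderiv y (Ico_subset_Icc_self hy)) x hx).trans
    ha

theorem eq_of_flux_eq_zero (hd : ∀ x ∈ Icc a b, 0 < d x)
    (hN : DifferentiableOn ℝ N (Icc a b))
    (hflux : ∀ x ∈ Icc a b, d x * derivWithin N (Icc a b) x = 0) :
    ∀ x ∈ Icc a b, N x = N a := by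
  have hN' (x) (hx : x ∈ Icc a b) : derivWithin N (Icc a b) x = 0 :=
    (mul_eq_zero.mp (hflux x hx)).resolve_left (hd x hx).ne'
  exact constant_of_derivWithin_zero hN (fun x hx => hN' x (Ico_subset_Icc_self hx))

end ConstantFlux

theorem intervalIntegral_eq_of_eq_on_Icc {a b c : ℝ} {f : ℝ → ℝ} (hab : a ≤ b)
    (hf : ∀ x ∈ Icc a b, f x = c) : ∫ x in a..b, f x = (b - a) * c := by
  rw [intervalIntegral.integral_congr (g := fun _ => c) (by rwa [uIcc_of_le hab]),
    intervalIntegral.integral_const, smul_eq_mul]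

theorem eq_of_transfer_eq_zero {μ A Q K c : ℝ} (hμ : 0 < μ) (hA : 0 < A)
    (h : μ * A * (Q - K * c / A) = 0) : Q = K * c / A :=
  sub_eq_zero.mp ((mul_eq_zero.mp h).resolve_left (by positivity))

theorem active_ingredient_steady_state_unique_general
    (V_A V_B A L muA muB KA1 KB1 QA0 : ℝ)
    (hVA : 0 < V_A) (hVB : 0 < V_B) (hA : 0 < A) (hL : 0 < L)
    (hmuA : 0 < muA) (hmuB : 0 < muB)
    (hKA : 0 < KA1) (hKB : 0 < KB1)
    (d : ℝ → ℝ)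
    (hd_pos : ∀ x ∈ Set.Icc (0 : ℝ) L, 0 < d x)
    (Q_A Q_B : ℝ) (N : ℝ → ℝ)
    (hN : ContDiffOn ℝ 1 N (Set.Icc 0 L))
    (hflux_diff : DifferentiableOn ℝ
      (fun x => d x * derivWithin N (Set.Icc 0 L) x) (Set.Icc 0 L))
    (hpde : ∀ x ∈ Set.Icc (0 : ℝ) L,
      derivWithin (fun x' => d x' * derivWithin N (Set.Icc 0 L) x')
        (Set.Icc 0 L) x = 0)
    (hodeA : (0 : ℝ) = -(muA * A * (Q_A - KA1 * N 0 / A)))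
    (hodeB : (0 : ℝ) = muB * A * (KB1 * N L / A - Q_B))
    (hbc0 : -(d 0 * derivWithin N (Set.Icc 0 L) 0) =
      muA * A * (Q_A - KA1 * N 0 / A))
    (hmass : V_A * Q_A + (∫ x in (0 : ℝ)..L, N x) + V_B * Q_B = V_A * QA0) :
    (∀ x ∈ Set.Icc (0 : ℝ) L, ∀ x' ∈ Set.Icc (0 : ℝ) L, N x = N x') ∧
    Q_A = KA1 * V_A * QA0 / (KA1 * V_A + KB1 * V_B + A * L) ∧
    (∀ x ∈ Set.Icc (0 : ℝ) L, N x = A * Q_A / KA1) ∧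
    Q_B = (KB1 / KA1) * Q_A := by
  have hflux := flux_eq_zero_of_derivWithin_eq_zero hflux_diff hpde (by linarith)
  have hNconst := eq_of_flux_eq_zero hd_pos (hN.differentiableOn one_ne_zero) hflux
  set c := N 0
  have hNL : N L = c := hNconst L ⟨hL.le, le_rfl⟩
  have hQA : Q_A = KA1 * c / A := eq_of_transfer_eq_zero hmuA hA (by linarith)
  have hQB : Q_B = KB1 * c / A := eq_of_transfer_eq_zero hmuB hA (by rw [← hNL]; linarith)
  rw [intervalIntegral_eq_of_eq_on_Icc hL.le hNconst, hQA, hQB] at hmass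
  have hc : c = A * V_A * QA0 / (KA1 * V_A + KB1 * V_B + A * L) := by
    field_simp at hmass ⊢
    linarith
  refine ⟨fun x hx x' hx' => by rw [hNconst x hx, hNconst x' hx'], ?_, ?_, ?_⟩
  · rw [hQA, hc]; field_simp
  · intro x hx; rw [hNconst x hx, hQA]; field_simp
  · rw [hQB, hQA]; field_simp

/-- Uniqueness of the active-ingredient steady state with `η = 0` and a
spatially varying positive diffusion coefficient `d`: any time-independent
solution of the active-ingredient system (zero ODE right-hand sides,
`(d N')' = 0` in the cuticle, flux boundary conditions, and total mass
`V_A Q_A⁰`) is the explicit steady state: `N` is constant on `[0,L]` and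
`Q_A = K_{A,1} V_A Q_A⁰ / (K_{A,1} V_A + K_{B,1} V_B + A L)`,
`N ≡ A Q_A / K_{A,1}`, `Q_B = (K_{B,1}/K_{A,1}) Q_A`. -/
theorem active_ingredient_steady_state_unique
    (V_A V_B A L muA muB KA1 KB1 QA0 : ℝ)
    (hVA : 0 < V_A) (hVB : 0 < V_B) (hA : 0 < A) (hL : 0 < L)
    (hmuA : 0 < muA) (hmuB : 0 < muB)
    (hKA : 0 < KA1) (hKB : 0 < KB1) (hQA0 : 0 < QA0)
    (d : ℝ → ℝ)
    (hd_cont : ContinuousOn d (Set.Icc 0 L))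
    (hd_pos : ∀ x ∈ Set.Icc (0 : ℝ) L, 0 < d x)
    (Q_A Q_B : ℝ) (N : ℝ → ℝ)
    (hN : ContDiffOn ℝ 1 N (Set.Icc 0 L))
    (hflux_diff : DifferentiableOn ℝ
      (fun x => d x * derivWithin N (Set.Icc 0 L) x) (Set.Icc 0 L))
    (hpde : ∀ x ∈ Set.Icc (0 : ℝ) L,
      derivWithin (fun x' => d x' * derivWithin N (Set.Icc 0 L) x')
        (Set.Icc 0 L) x = 0)
    (hodeA : (0 : ℝ) = -(muA * A * (Q_A - KA1 * N 0 / A)))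
    (hodeB : (0 : ℝ) = muB * A * (KB1 * N L / A - Q_B))
    (hbc0 : -(d 0 * derivWithin N (Set.Icc 0 L) 0) =
      muA * A * (Q_A - KA1 * N 0 / A))
    (hbcL : -(d L * derivWithin N (Set.Icc 0 L) L) =
      muB * A * (KB1 * N L / A - Q_B))
    (hmass : V_A * Q_A + (∫ x in (0 : ℝ)..L, N x) + V_B * Q_B = V_A * QA0) :
    (∀ x ∈ Set.Icc (0 : ℝ) L, ∀ x' ∈ Set.Icc (0 : ℝ) L, N x = N x') ∧
    Q_A = KA1 * V_A * QA0 / (KA1 * V_A + KB1 * V_B + A * L) ∧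
    (∀ x ∈ Set.Icc (0 : ℝ) L, N x = A * Q_A / KA1) ∧
    Q_B = (KB1 / KA1) * Q_A :=
  active_ingredient_steady_state_unique_general V_A V_B A L muA muB KA1 KB1 QA0 hVA hVB hA hL hmuA
    hmuB hKA hKB d hd_pos Q_A Q_B N hN hflux_diff hpde hodeA hodeB hbc0 hmass
end

section
/- Let P_A, P_B : ℝ → ℝ be differentiable and M : ℝ × [0,L] → ℝ be such that for each t the map x ↦ M(t,x) is twice continuously differentiable on [0,L], for each x the map t ↦ M(t,x) is differentiable with ∂M/∂t jointly continuous, and suppose they satisfy: V_A P_A'(t) = −λ_A A (P_A(t) − κ_{A,1} M(t,0)/A); ∂M/∂t(t,x) = D_P ∂²M/∂x²(t,x) for all x ∈ [0,L]; V_B P_B'(t) = λ_B A (κ_{B,1} M(t,L)/A − P_B(t)) − β V_B P_B(t); −D_P ∂M/∂x(t,0) = λ_A A (P_A(t) − κ_{A,1} M(t,0)/A); and −D_P ∂M/∂x(t,L) = λ_B A (κ_{B,1} M(t,L)/A − P_B(t)). Then the total mass W(t) = V_A P_A(t) + ∫_0^L M(t,x) dx + V_B P_B(t) is differentiable with W'(t)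 = −β V_B P_B(t) for every t. -/
/-!
Integrating the diffusion equation over the cuticle shows that the cuticle mass changes at the
rate `D_P (∂ₓM(t,L) - ∂ₓM(t,0))` of the net boundary flux: differentiation under the integral
sign is justified because `∂ₜM` is continuous, hence bounded on compact sets, and the integral of
`∂ₓ²M` is evaluated by the fundamental theorem of calculus. The flux boundary conditions identify
the two boundary fluxes with the exchange terms of the droplet and tissue equations, so all
exchange terms cancel in `W'` and only the loss `-β V_B P_B` remains.
-/

open MeasureTheory Set Metric Interval intervalIntegral

theorem hasDerivAt_intervalIntegral_of_continuousOn_deriv {E : Type*} [NormedAddCommGroup E]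
    [NormedSpace ℝ E] [CompleteSpace E] {f : ℝ → ℝ → E} {a b : ℝ}
    (hf : ∀ s, ContinuousOn (f s) [[a, b]])
    (hdiff : ∀ x ∈ [[a, b]], ∀ s, DifferentiableAt ℝ (fun s => f s x) s)
    (hcont : ContinuousOn (fun p : ℝ × ℝ => deriv (fun s => f s p.2) p.1) (univ ×ˢ [[a, b]]))
    (t : ℝ) :
    HasDerivAt (fun s => ∫ x in a..b, f s x) (∫ x in a..b, deriv (fun s => f s x) t) t := by
  obtain ⟨C, hC⟩ := (isCompact_closedBall t 1).prod isCompact_uIcc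
    |>.exists_bound_of_continuousOn (hcont.mono (prod_mono (subset_univ _) subset_rfl))
  have hmeas (s : ℝ) : AEStronglyMeasurable (f s) (volume.restrict (Ι a b)) :=
    ((hf s).mono uIoc_subset_uIcc).aestronglyMeasurable measurableSet_uIoc
  have hderiv_cont : ContinuousOn (fun x => deriv (fun s => f s x) t) [[a, b]] :=
    hcont.comp (Continuous.prodMk_right t).continuousOn fun x hx => ⟨trivial, hx⟩
  have hbound : ∀ᵐ x, x ∈ Ι a b → ∀ s ∈ ball t 1, ‖deriv (fun s => f s x) s‖ ≤ C :=
    .of_forall fun x hx s hs => hC (s, x) ⟨ball_subset_closedBall hs, uIoc_subset_uIcc hx⟩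
  have hderiv : ∀ᵐ x, x ∈ Ι a b → ∀ s ∈ ball t 1,
      HasDerivAt (fun s => f s x) (deriv (fun s => f s x) s) s :=
    .of_forall fun x hx s _ => (hdiff x (uIoc_subset_uIcc hx) s).hasDerivAt
  exact (hasDerivAt_integral_of_dominated_loc_of_deriv_le (ball_mem_nhds t one_pos)
    (.of_forall hmeas) (hf t).intervalIntegrable
    ((hderiv_cont.mono uIoc_subset_uIcc).aestronglyMeasurable measurableSet_uIoc)
    hbound intervalIntegrable_const hderiv).2

theorem hasDerivAt_integral_of_heat_equation {M : ℝ → ℝ → ℝ} {a b D : ℝ} (hab : a < b)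
    (hMx : ∀ t, ContDiffOn ℝ 2 (M t) (Icc a b))
    (hMt : ∀ x ∈ Icc a b, ∀ t, DifferentiableAt ℝ (fun s => M s x) t)
    (hMt_cont : ContinuousOn (fun p : ℝ × ℝ => deriv (fun s => M s p.2) p.1)
      (univ ×ˢ Icc a b))
    (hpde : ∀ t, ∀ x ∈ Icc a b, deriv (fun s => M s x) t =
      D * derivWithin (derivWithin (M t) (Icc a b)) (Icc a b) x)
    (t : ℝ) :
    HasDerivAt (fun s => ∫ x in a..b, M s x)
      (D * (derivWithin (M t) (Icc a b) b - derivWithin (M t) (Icc a b) a)) t := by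
  have hI : [[a, b]] = Icc a b := uIcc_of_le hab.le
  have hflux : ∫ x in a..b, deriv (fun s => M s x) t =
      D * (derivWithin (M t) (Icc a b) b - derivWithin (M t) (Icc a b) a) := by
    rw [← integral_derivWithin_Icc_of_contDiffOn_Icc
      ((hMx t).derivWithin (uniqueDiffOn_Icc hab) (by norm_num)) hab.le,
      ← intervalIntegral.integral_const_mul]
    exact integral_congr fun x hx => hpde t x (hI ▸ hx)
  rw [← hI] at hMx hMt hMt_cont
  exact hflux ▸ hasDerivAt_intervalIntegral_of_continuousOn_deriv
    (fun s => (hMx s).continuousOn) hMt hMt_cont t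

theorem adjuvant_mass_balance_general
    (V_A V_B A L D_P lamA lamB κA1 κB1 β : ℝ)
    (hL : 0 < L)
    (P_A P_B : ℝ → ℝ) (M : ℝ → ℝ → ℝ)
    (hPA : Differentiable ℝ P_A) (hPB : Differentiable ℝ P_B)
    (hMx : ∀ t : ℝ, ContDiffOn ℝ 2 (M t) (Set.Icc 0 L))
    (hMt : ∀ x ∈ Set.Icc (0 : ℝ) L, ∀ t : ℝ,
      DifferentiableAt ℝ (fun s => M s x) t)
    (hMt_cont : ContinuousOn
      (fun p : ℝ × ℝ => deriv (fun s => M s p.2) p.1)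
      (Set.univ ×ˢ Set.Icc 0 L))
    (hodeA : ∀ t : ℝ, V_A * deriv P_A t =
      -(lamA * A * (P_A t - κA1 * M t 0 / A)))
    (hpde : ∀ t : ℝ, ∀ x ∈ Set.Icc (0 : ℝ) L,
      deriv (fun s => M s x) t =
        D_P * derivWithin (derivWithin (M t) (Set.Icc 0 L)) (Set.Icc 0 L) x)
    (hodeB : ∀ t : ℝ, V_B * deriv P_B t =
      lamB * A * (κB1 * M t L / A - P_B t) - β * V_B * P_B t)
    (hbc0 : ∀ t : ℝ, -(D_P * derivWithin (M t) (Set.Icc 0 L) 0) =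
      lamA * A * (P_A t - κA1 * M t 0 / A))
    (hbcL : ∀ t : ℝ, -(D_P * derivWithin (M t) (Set.Icc 0 L) L) =
      lamB * A * (κB1 * M t L / A - P_B t)) :
    ∀ t : ℝ, HasDerivAt
      (fun s => V_A * P_A s + (∫ x in (0 : ℝ)..L, M s x) + V_B * P_B s)
      (-(β * V_B * P_B t)) t := by
  intro t
  have hcuticle := hasDerivAt_integral_of_heat_equation hL hMx hMt hMt_cont hpde t
  refine (((hPA t).hasDerivAt.const_mul V_A).add hcuticle |>.add
    ((hPB t).hasDerivAt.const_mul V_B)).congr_deriv ?_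
  linear_combination hodeA t + hbc0 t + hodeB t - hbcL t

/-- Mass balance for the adjuvant hybrid ODE–PDE system: if `(P_A, M, P_B)`
solves the droplet ODE, the diffusion equation in the cuticle, the tissue ODE
with loss rate `β`, and the flux boundary conditions, then the total mass
`W(t) = V_A P_A(t) + ∫₀ᴸ M(t,x) dx + V_B P_B(t)` is differentiable with
`W'(t) = −β V_B P_B(t)` for every `t`. -/
theorem adjuvant_mass_balance
    (V_A V_B A L D_P lamA lamB κA1 κB1 β : ℝ)
    (hVA : 0 < V_A) (hVB : 0 < V_B) (hA : 0 < A) (hL : 0 < L)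
    (hDP : 0 < D_P) (hlamA : 0 < lamA) (hlamB : 0 < lamB)
    (hκA : 0 < κA1) (hκB : 0 < κB1) (hβ : 0 ≤ β)
    (P_A P_B : ℝ → ℝ) (M : ℝ → ℝ → ℝ)
    (hPA : Differentiable ℝ P_A) (hPB : Differentiable ℝ P_B)
    (hMx : ∀ t : ℝ, ContDiffOn ℝ 2 (M t) (Set.Icc 0 L))
    (hMt : ∀ x ∈ Set.Icc (0 : ℝ) L, ∀ t : ℝ,
      DifferentiableAt ℝ (fun s => M s x) t)
    (hMt_cont : ContinuousOn
      (fun p : ℝ × ℝ => deriv (fun s => M s p.2) p.1)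
      (Set.univ ×ˢ Set.Icc 0 L))
    (hodeA : ∀ t : ℝ, V_A * deriv P_A t =
      -(lamA * A * (P_A t - κA1 * M t 0 / A)))
    (hpde : ∀ t : ℝ, ∀ x ∈ Set.Icc (0 : ℝ) L,
      deriv (fun s => M s x) t =
        D_P * derivWithin (derivWithin (M t) (Set.Icc 0 L)) (Set.Icc 0 L) x)
    (hodeB : ∀ t : ℝ, V_B * deriv P_B t =
      lamB * A * (κB1 * M t L / A - P_B t) - β * V_B * P_B t)
    (hbc0 : ∀ t : ℝ, -(D_P * derivWithin (M t) (Set.Icc 0 L) 0) =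
      lamA * A * (P_A t - κA1 * M t 0 / A))
    (hbcL : ∀ t : ℝ, -(D_P * derivWithin (M t) (Set.Icc 0 L) L) =
      lamB * A * (κB1 * M t L / A - P_B t)) :
    ∀ t : ℝ, HasDerivAt
      (fun s => V_A * P_A s + (∫ x in (0 : ℝ)..L, M s x) + V_B * P_B s)
      (-(β * V_B * P_B t)) t :=
  adjuvant_mass_balance_general V_A V_B A L D_P lamA lamB κA1 κB1 β hL P_A P_B M hPA hPB hMx hMt
    hMt_cont hodeA hpde hodeB hbc0 hbcL
end

section
/- Let Q_A, Q_B : ℝ → ℝ be differentiable, let g : ℝ × [0,L] → ℝ be continuous with g(t,x) > 0 (representing the concentration-dependent diffusion coefficient D_Q(M_1(t,x))), and let N : ℝ × [0,L] → ℝ be such that for each t the map x ↦ N(t,x) is continuously differentiable on [0,L] with x ↦ g(t,x) ∂N/∂x(t,x) continuously differentiable, for each x the map t ↦ N(t,x) is differentiable with ∂N/∂t jointly continuous, and suppose they satisfy: V_A Q_A'(t) = −μ_A A (Q_A(t) − K_{A,1} N(t,0)/A); ∂N/∂t(t,x) = ∂/∂x ( g(t,x) ∂N/∂x(t,x) ) for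 all x ∈ [0,L]; V_B Q_B'(t) = μ_B A (K_{B,1} N(t,L)/A − Q_B(t)) − η V_B Q_B(t); −g(t,0) ∂N/∂x(t,0) = μ_A A (Q_A(t) − K_{A,1} N(t,0)/A); and −g(t,L) ∂N/∂x(t,L) = μ_B A (K_{B,1} N(t,L)/A − Q_B(t)). Then the total mass W(t) = V_A Q_A(t) + ∫_0^L N(t,x) dx + V_B Q_B(t) is differentiable with W'(t) = −η V_B Q_B(t) for every t. -/
/-!
Differentiating under the integral sign and using the PDE in flux form, the cuticle mass
`∫₀ᴸ N(t,x) dx` changes at the rate `Φ(t,L) - Φ(t,0)` of the flux `Φ = g ∂N/∂x` through its two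
faces (fundamental theorem of calculus). By the boundary conditions these two fluxes are exactly
the exchange terms of the droplet and tissue ODEs, with opposite signs, so they cancel in `W'`
and only the loss `-η V_B Q_B` remains.
-/

open Set
open scoped Interval

section

variable {E : Type*} [NormedAddCommGroup E] [NormedSpace ℝ E]

namespace intervalIntegral

theorem hasDerivAt_integral_of_continuousOn_deriv {F : ℝ → ℝ → E} {a b : ℝ} (t : ℝ)
    (hF : ∀ s, ContinuousOn (F s) (uIcc a b))
    (hF_diff : ∀ x ∈ uIcc a b, ∀ s, DifferentiableAt ℝ (fun s => F s x) s)
    (hF'_cont : ContinuousOn (fun p : ℝ × ℝ => deriv (fun s => F s p.2) p.1)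
      (univ ×ˢ uIcc a b)) :
    HasDerivAt (fun s => ∫ x in a..b, F s x) (∫ x in a..b, deriv (fun s => F s x) t) t := by
  have hsub : Ι a b ⊆ uIcc a b := uIoc_subset_uIcc
  -- A uniform bound on the compact rectangle `[t-1, t+1] × [a, b]` dominates the derivative.
  obtain ⟨C, hC⟩ : ∃ C, ∀ p ∈ Icc (t - 1) (t + 1) ×ˢ uIcc a b,
      ‖deriv (fun s => F s p.2) p.1‖ ≤ C :=
    (isCompact_Icc.prod isCompact_uIcc).exists_bound_of_continuousOn
      (hF'_cont.mono fun p hp => ⟨trivial, hp.2⟩)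
  have hF'_t : ContinuousOn (fun x => deriv (fun s => F s x) t) (uIcc a b) :=
    hF'_cont.comp (continuous_const.prodMk continuous_id).continuousOn fun x hx => ⟨trivial, hx⟩
  refine (hasDerivAt_integral_of_dominated_loc_of_deriv_le (bound := fun _ => C)
    (F' := fun s x => deriv (fun s => F s x) s)
    (Metric.ball_mem_nhds t one_pos)
    (Filter.Eventually.of_forall fun s =>
      ((hF s).mono hsub).aestronglyMeasurable measurableSet_uIoc)
    ((hF t).intervalIntegrable)
    ((hF'_t.mono hsub).aestronglyMeasurable measurableSet_uIoc)
    ?_ intervalIntegrable_const ?_).2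
  · filter_upwards with x hx s hs
    exact hC (s, x) ⟨Ioo_subset_Icc_self (Real.ball_eq_Ioo t 1 ▸ hs), hsub hx⟩
  · filter_upwards with x hx s _
    exact (hF_diff x (hsub hx) s).hasDerivAt

end intervalIntegral

theorem hasDerivAt_integral_of_conservationLaw [CompleteSpace E] {N : ℝ → ℝ → E} {Φ : ℝ → E}
    {a b : ℝ} (hab : a ≤ b) (t : ℝ) (hN : ∀ s, ContinuousOn (N s) (Icc a b))
    (hN_diff : ∀ x ∈ Icc a b, ∀ s, DifferentiableAt ℝ (fun s => N s x) s)
    (hN'_cont : ContinuousOn (fun p : ℝ × ℝ => deriv (fun s => N s p.2) p.1)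
      (univ ×ˢ Icc a b))
    (hΦ : ContDiffOn ℝ 1 Φ (Icc a b))
    (hlaw : ∀ x ∈ Icc a b, deriv (fun s => N s x) t = derivWithin Φ (Icc a b) x) :
    HasDerivAt (fun s => ∫ x in a..b, N s x) (Φ b - Φ a) t := by
  rw [← uIcc_of_le hab] at hN hN_diff hN'_cont
  have hmass := intervalIntegral.hasDerivAt_integral_of_continuousOn_deriv t hN hN_diff hN'_cont
  rwa [intervalIntegral.integral_congr fun x hx => hlaw x (uIcc_of_le hab ▸ hx),
    intervalIntegral.integral_derivWithin_Icc_of_contDiffOn_Icc hΦ hab] at hmass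

end

theorem active_ingredient_mass_balance_general
    (V_A V_B A L muA muB KA1 KB1 η : ℝ)
    (hL : 0 < L)
    (Q_A Q_B : ℝ → ℝ) (g N : ℝ → ℝ → ℝ)
    (hQA : Differentiable ℝ Q_A) (hQB : Differentiable ℝ Q_B)
    (hNx : ∀ t : ℝ, ContDiffOn ℝ 1 (N t) (Set.Icc 0 L))
    (hflux : ∀ t : ℝ, ContDiffOn ℝ 1
      (fun x => g t x * derivWithin (N t) (Set.Icc 0 L) x) (Set.Icc 0 L))
    (hNt : ∀ x ∈ Set.Icc (0 : ℝ) L, ∀ t : ℝ,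
      DifferentiableAt ℝ (fun s => N s x) t)
    (hNt_cont : ContinuousOn
      (fun p : ℝ × ℝ => deriv (fun s => N s p.2) p.1)
      (Set.univ ×ˢ Set.Icc 0 L))
    (hodeA : ∀ t : ℝ, V_A * deriv Q_A t =
      -(muA * A * (Q_A t - KA1 * N t 0 / A)))
    (hpde : ∀ t : ℝ, ∀ x ∈ Set.Icc (0 : ℝ) L,
      deriv (fun s => N s x) t =
        derivWithin (fun x' => g t x' * derivWithin (N t) (Set.Icc 0 L) x')
          (Set.Icc 0 L) x)
    (hodeB : ∀ t : ℝ, V_B * deriv Q_B t =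
      muB * A * (KB1 * N t L / A - Q_B t) - η * V_B * Q_B t)
    (hbc0 : ∀ t : ℝ, -(g t 0 * derivWithin (N t) (Set.Icc 0 L) 0) =
      muA * A * (Q_A t - KA1 * N t 0 / A))
    (hbcL : ∀ t : ℝ, -(g t L * derivWithin (N t) (Set.Icc 0 L) L) =
      muB * A * (KB1 * N t L / A - Q_B t)) :
    ∀ t : ℝ, HasDerivAt
      (fun s => V_A * Q_A s + (∫ x in (0 : ℝ)..L, N s x) + V_B * Q_B s)
      (-(η * V_B * Q_B t)) t := by
  intro t
  have hcuticle := hasDerivAt_integral_of_conservationLaw hL.le t (fun s => (hNx s).continuousOn) hNt hNt_cont (hflux t) (hpde t)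
  have hW := (((hQA t).hasDerivAt.const_mul V_A).add hcuticle).add
    ((hQB t).hasDerivAt.const_mul V_B)
  exact hW.congr_deriv (by linarith [hodeA t, hodeB t, hbc0 t, hbcL t])

/-- Mass balance for the active-ingredient hybrid ODE–PDE system with a
concentration-dependent diffusion coefficient `g(t,x) > 0`: if
`(Q_A, N, Q_B)` solves the droplet ODE, the diffusion equation in flux form
`∂N/∂t = ∂/∂x (g ∂N/∂x)` in the cuticle, the tissue ODE with loss rate `η`,
and the flux boundary conditions, then the total mass
`W(t) = V_A Q_A(t) + ∫₀ᴸ N(t,x) dx + V_B Q_B(t)` is differentiable with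
`W'(t) = −η V_B Q_B(t)` for every `t`. -/
theorem active_ingredient_mass_balance
    (V_A V_B A L muA muB KA1 KB1 η : ℝ)
    (hVA : 0 < V_A) (hVB : 0 < V_B) (hA : 0 < A) (hL : 0 < L)
    (hmuA : 0 < muA) (hmuB : 0 < muB)
    (hKA : 0 < KA1) (hKB : 0 < KB1) (hη : 0 ≤ η)
    (Q_A Q_B : ℝ → ℝ) (g N : ℝ → ℝ → ℝ)
    (hQA : Differentiable ℝ Q_A) (hQB : Differentiable ℝ Q_B)
    (hg_cont : ContinuousOn (fun p : ℝ × ℝ => g p.1 p.2)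
      (Set.univ ×ˢ Set.Icc 0 L))
    (hg_pos : ∀ t : ℝ, ∀ x ∈ Set.Icc (0 : ℝ) L, 0 < g t x)
    (hNx : ∀ t : ℝ, ContDiffOn ℝ 1 (N t) (Set.Icc 0 L))
    (hflux : ∀ t : ℝ, ContDiffOn ℝ 1
      (fun x => g t x * derivWithin (N t) (Set.Icc 0 L) x) (Set.Icc 0 L))
    (hNt : ∀ x ∈ Set.Icc (0 : ℝ) L, ∀ t : ℝ,
      DifferentiableAt ℝ (fun s => N s x) t)
    (hNt_cont : ContinuousOn
      (fun p : ℝ × ℝ => deriv (fun s => N s p.2) p.1)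
      (Set.univ ×ˢ Set.Icc 0 L))
    (hodeA : ∀ t : ℝ, V_A * deriv Q_A t =
      -(muA * A * (Q_A t - KA1 * N t 0 / A)))
    (hpde : ∀ t : ℝ, ∀ x ∈ Set.Icc (0 : ℝ) L,
      deriv (fun s => N s x) t =
        derivWithin (fun x' => g t x' * derivWithin (N t) (Set.Icc 0 L) x')
          (Set.Icc 0 L) x)
    (hodeB : ∀ t : ℝ, V_B * deriv Q_B t =
      muB * A * (KB1 * N t L / A - Q_B t) - η * V_B * Q_B t)
    (hbc0 : ∀ t : ℝ, -(g t 0 * derivWithin (N t) (Set.Icc 0 L) 0) =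
      muA * A * (Q_A t - KA1 * N t 0 / A))
    (hbcL : ∀ t : ℝ, -(g t L * derivWithin (N t) (Set.Icc 0 L) L) =
      muB * A * (KB1 * N t L / A - Q_B t)) :
    ∀ t : ℝ, HasDerivAt
      (fun s => V_A * Q_A s + (∫ x in (0 : ℝ)..L, N s x) + V_B * Q_B s)
      (-(η * V_B * Q_B t)) t :=
  active_ingredient_mass_balance_general V_A V_B A L muA muB KA1 KB1 η hL Q_A Q_B g N hQA hQB hNx
    hflux hNt hNt_cont hodeA hpde hodeB hbc0 hbcL
end
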